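/- Let φ ⊂ ℝ² × M be admissible, let f : φ → [0, ∞] be its unique growth function, and assume f(x) < ∞ for all x ∈ φ. Then there exists a map h_c : φ → φ, with associated geometric descendant h_g(x) defined as the intersection point (ξ + [0,∞)·v) ∩ (η + [0,∞)·w) where (η,w) = h_c(x), satisfying: (hard-core) [ξ, h_g(x)) ∩ [η, h_g(y)) = ∅ for all distinct x = (ξ,v), y = (η,w) ∈ φ; (existence of stopping neighbors) for every x ∈ φ, writing y = (η,w) = h_c(x), one has h_g(x) ∈ [η, h_g(y)) and |h_g(x) − η| < |h_g(x) − ξ|. Moreover, the values h_c(x), x ∈ φ, are uniquely determined by these properties. -/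

import Mathlib

noncomputable section

namespace Lilypond

open scoped ENNReal

/-- Marked points: a spatial position in `ℝ² = ℝ × ℝ` (with the supremum norm)
together with a mark, which is a direction vector in `ℝ²`. -/
abbrev Pt : Type := (ℝ × ℝ) × (ℝ × ℝ)

def e1 : ℝ × ℝ := (1, 0)
def e2 : ℝ × ℝ := (0, 1)

/-- The mark space `M = {e₁, −e₁, e₂, −e₂}`. -/
def Mset : Set (ℝ × ℝ) := {e1, -e1, e2, -e2}

/-- The Euclidean norm on `ℝ²` (the norm of `ℝ × ℝ` itself is the sup-norm `|·|_∞`). -/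
def eNorm (p : ℝ × ℝ) : ℝ := Real.sqrt (p.1 ^ 2 + p.2 ^ 2)

/-- The eight forbidden directions `{±e₁, ±e₂, (±e₁ ± e₂)/√2}`. -/
def badDirs : Set (ℝ × ℝ) :=
  {e1, -e1, e2, -e2, (Real.sqrt 2)⁻¹ • (e1 + e2), (Real.sqrt 2)⁻¹ • (e1 - e2),
    (Real.sqrt 2)⁻¹ • (-e1 + e2), (Real.sqrt 2)⁻¹ • (-e1 - e2)}

/-- The set of spatial positions of a marked configuration. -/
def pos (φ : Set Pt) : Set (ℝ × ℝ) := Prod.fst '' φ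

/-- `A` contains an (infinite) anisotropic descending chain: there are `b > 0` and pairwise
distinct points `ξ₀, ξ₁, ξ₂, …` of `A` with `|ξ₀ − ξ₁|_∞ ≤ b` and
`|ξ_{i+1} − ξ_i|_∞ < |ξ_i − ξ_{i−1}|_∞` for all `i ≥ 1`. -/
def HasInfDescChain (A : Set (ℝ × ℝ)) : Prop :=
  ∃ b > (0 : ℝ), ∃ ξ : ℕ → ℝ × ℝ, Function.Injective ξ ∧ (∀ i, ξ i ∈ A) ∧
    ‖ξ 0 - ξ 1‖ ≤ b ∧ ∀ i, 1 ≤ i → ‖ξ (i + 1) - ξ i‖ < ‖ξ i - ξ (i - 1)‖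

/-- Local finiteness of a marked configuration. -/
def LocFin (φ : Set Pt) : Prop := ∀ r : ℝ, {x ∈ φ | ‖x.1‖ ≤ r}.Finite

/-- A marked set `φ ⊂ ℝ² × M` is admissible: it is locally finite, all marks lie in `M`,
its set of spatial positions contains no anisotropic descending chain, and
`(ξ − η)/|ξ − η| ∉ {±e₁, ±e₂, (±e₁ ± e₂)/√2}` (Euclidean normalization) for all distinct
`x = (ξ,v), y = (η,w) ∈ φ`. -/
def Admissible (φ : Set Pt) : Prop :=
  LocFin φ ∧ (∀ x ∈ φ, x.2 ∈ Mset) ∧ ¬ HasInfDescChain (pos φ) ∧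
    ∀ x ∈ φ, ∀ y ∈ φ, x ≠ y → (eNorm (x.1 - y.1))⁻¹ • (x.1 - y.1) ∉ badDirs

/-- The half-open growth segment `[ξ, ξ + l·v)`, interpreted as the full ray
`ξ + [0,∞)·v` when `l = ∞`. -/
def seg (ξ v : ℝ × ℝ) (l : ℝ≥0∞) : Set (ℝ × ℝ) :=
  {p | ∃ t : ℝ, 0 ≤ t ∧ ENNReal.ofReal t < l ∧ p = ξ + t • v}

/-- The tip `ξ + f(x)·v` of the (finite) segment grown from `x = (ξ, v)`. -/
def tip (f : Pt → ℝ≥0∞) (x : Pt) : ℝ × ℝ := x.1 + (f x).toReal • x.2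

/-- `y = (η, w)` is a stopping neighbor of `x = (ξ, v)` in `φ` (w.r.t. the growth
function `f`): `y ∈ φ`, `ξ + f(x)v ∈ [η, η + f(y)w)` and `|ξ + f(x)v − η| < f(x)`
(Euclidean norm). -/
def IsStopNbr (φ : Set Pt) (f : Pt → ℝ≥0∞) (x y : Pt) : Prop :=
  y ∈ φ ∧ tip f x ∈ seg y.1 y.2 (f y) ∧ eNorm (tip f x - y.1) < (f x).toReal

/-- `f` is a growth function for `φ`: the half-open segments `[ξ, ξ + f(x)v)` are pairwise
disjoint (hard-core property), every `x ∈ φ` with `f(x) < ∞` has a unique stopping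
neighbor, and (as a normalization identifying `f` with a function on `φ`) `f` vanishes
off `φ`. -/
def IsGrowthFn (φ : Set Pt) (f : Pt → ℝ≥0∞) : Prop :=
  (∀ x ∈ φ, ∀ y ∈ φ, x ≠ y → seg x.1 x.2 (f x) ∩ seg y.1 y.2 (f y) = ∅) ∧
  (∀ x ∈ φ, f x ≠ ⊤ → ∃! y, IsStopNbr φ f x y) ∧
  (∀ x, x ∉ φ → f x = 0)

open Classical in
/-- The growth function `f_φ` of a configuration (chosen by choice; it is unique on
admissible configurations). -/
def growthFn (φ : Set Pt) : Pt → ℝ≥0∞ :=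
  if h : ∃ f, IsGrowthFn φ f then h.choose else fun _ => 0

/-- `N′`: nonempty admissible configurations possessing a growth function which is
finite everywhere on the configuration. -/
def Nprime (φ : Set Pt) : Prop :=
  φ.Nonempty ∧ Admissible φ ∧ (∃ f, IsGrowthFn φ f) ∧ ∀ x ∈ φ, growthFn φ x ≠ ⊤

open Classical in
/-- The combinatorial descendant `h_c(φ, x)`: the (unique) stopping neighbor of `x`
in `φ`. -/
def hc (φ : Set Pt) (x : Pt) : Pt :=
  if h : ∃ y, IsStopNbr φ (growthFn φ) x y then h.choose else x

/-- The geometric descendant `h_g(φ, x) = ξ + f_φ(x)·v`. -/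
def hg (φ : Set Pt) (x : Pt) : ℝ × ℝ := tip (growthFn φ) x

/-- The closed segment `I(φ, x) = [ξ, h_g(φ, x)]`. -/
def I (φ : Set Pt) (x : Pt) : Set (ℝ × ℝ) := segment ℝ x.1 (hg φ x)


/-- The ray `ξ + [0,∞)·v`. -/
def ray (ξ v : ℝ × ℝ) : Set (ℝ × ℝ) := {p | ∃ t : ℝ, 0 ≤ t ∧ p = ξ + t • v}

/-- The half-open segment `[ξ, p)` from `ξ` towards `p`. -/
def segTo (ξ p : ℝ × ℝ) : Set (ℝ × ℝ) := {q | ∃ t : ℝ, 0 ≤ t ∧ t < 1 ∧ q = ξ + t • (p - ξ)}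

/-- The defining properties of the combinatorial descendant map `h_c` on `φ`, together
with its associated geometric descendant `h_g`: `h_c` maps `φ` to `φ`; `h_g(x)` is an
intersection point of the rays emanating from `x` and from `h_c(x)`; the half-open
segments `[ξ, h_g(x))` are pairwise disjoint (hard-core property); and
`h_g(x) ∈ [η, h_g(y))` with `|h_g(x) − η| < |h_g(x) − ξ|` (Euclidean norm), where
`y = (η, w) = h_c(x)` (existence of stopping neighbors). -/
def HcSpec (φ : Set Pt) (hcm : Pt → Pt) (hgm : Pt → ℝ × ℝ) : Prop :=
  (∀ x ∈ φ, hcm x ∈ φ ∧ hgm x ∈ ray x.1 x.2 ∧ hgm x ∈ ray (hcm x).1 (hcm x).2) ∧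
  (∀ x ∈ φ, ∀ y ∈ φ, x ≠ y → segTo x.1 (hgm x) ∩ segTo y.1 (hgm y) = ∅) ∧
  (∀ x ∈ φ, hgm x ∈ segTo (hcm x).1 (hgm (hcm x)) ∧
    eNorm (hgm x - (hcm x).1) < eNorm (hgm x - x.1))

/-! Existence: let `h_c(x)` be the stopping neighbour of `x` for `f` and `h_g(x) = ξ + f(x)v`.
Uniqueness: for any `(h_c', h_g')` with the required properties, the lengths `|h_g'(x) − ξ|` are
again hard-core lengths with stopping neighbours, so `h_g' = h_g` on `φ` once such lengths are
unique, and then `h_c'(x)` is a stopping neighbour of `x` for `f`, hence equal to `h_c(x)`.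

Suppose two such length functions `a`, `b` differ at `x = (ξ,v)`, say `a(x) < b(x)`. Let
`y = (η,w)` be the `a`-stopping neighbour of `x`. The hard-core property of `b` forces
`b(y) ≤ |ξ + a(x)v − η| < min(a(x), a(y))`, so `a(y) ≠ b(y)` and `min(a, b)` drops strictly from
`x` to `y`. As the marks are axis-parallel while `ξ − η` is not, `v ⟂ w` and
`|ξ − η|_∞ = a(x) = min(a, b)(x)`. Iterating gives an anisotropic descending chain. -/

def realSeg (ξ v : ℝ × ℝ) (L : ℝ) : Set (ℝ × ℝ) := {p | ∃ t : ℝ, 0 ≤ t ∧ t < L ∧ p = ξ + t • v}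

lemma seg_eq_realSeg {ξ v : ℝ × ℝ} {l : ℝ≥0∞} (hl : l ≠ ⊤) :
    seg ξ v l = realSeg ξ v l.toReal := by
  ext p
  refine exists_congr fun t => and_congr_right fun ht => ?_
  rw [ENNReal.ofReal_lt_iff_lt_toReal ht hl]

lemma segTo_add_smul {ξ v : ℝ × ℝ} {L : ℝ} (hL : 0 < L) :
    segTo ξ (ξ + L • v) = realSeg ξ v L := by
  ext p
  constructor
  · rintro ⟨t, ht0, ht1, rfl⟩
    refine ⟨t * L, mul_nonneg ht0 hL.le, by nlinarith, ?_⟩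
    rw [add_sub_cancel_left, smul_smul]
  · rintro ⟨s, hs0, hsL, rfl⟩
    refine ⟨s / L, div_nonneg hs0 hL.le, (div_lt_one hL).2 hsL, ?_⟩
    rw [add_sub_cancel_left, smul_smul, div_mul_cancel₀ _ hL.ne']

lemma mem_Mset_iff {v : ℝ × ℝ} :
    v ∈ Mset ↔ v = (1, 0) ∨ v = (-1, 0) ∨ v = (0, 1) ∨ v = (0, -1) := by
  simp [Mset, e1, e2, Prod.ext_iff]

lemma mem_Mset_axis {v : ℝ × ℝ} (hv : v ∈ Mset) :
    (v.2 = 0 ∧ |v.1| = 1) ∨ (v.1 = 0 ∧ |v.2| = 1) := by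
  rcases mem_Mset_iff.1 hv with rfl | rfl | rfl | rfl <;> norm_num

lemma eNorm_nonneg (p : ℝ × ℝ) : 0 ≤ eNorm p := Real.sqrt_nonneg _

lemma eNorm_smul (t : ℝ) (p : ℝ × ℝ) : eNorm (t • p) = |t| * eNorm p := by
  simp only [eNorm, Prod.smul_fst, Prod.smul_snd, smul_eq_mul, mul_pow]
  rw [← mul_add, Real.sqrt_mul (sq_nonneg t), Real.sqrt_sq_eq_abs]

lemma eNorm_smul_of_mem_Mset {v : ℝ × ℝ} (hv : v ∈ Mset) {t : ℝ} (ht : 0 ≤ t) :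
    eNorm (t • v) = t := by
  have hv1 : eNorm v = 1 := by
    rcases mem_Mset_iff.1 hv with rfl | rfl | rfl | rfl <;> norm_num [eNorm]
  rw [eNorm_smul, hv1, mul_one, abs_of_nonneg ht]

lemma eq_add_eNorm_smul_of_mem_ray {ξ v p : ℝ × ℝ} (hv : v ∈ Mset) (hp : p ∈ ray ξ v) :
    p = ξ + eNorm (p - ξ) • v := by
  obtain ⟨t, ht, rfl⟩ := hp
  rw [add_sub_cancel_left, eNorm_smul_of_mem_Mset hv ht]

lemma segTo_eq_realSeg {ξ v p : ℝ × ℝ} (hv : v ∈ Mset) (hp : p ∈ ray ξ v)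
    (hpos : 0 < eNorm (p - ξ)) : segTo ξ p = realSeg ξ v (eNorm (p - ξ)) := by
  obtain ⟨t, ht, rfl⟩ := hp
  rw [add_sub_cancel_left, eNorm_smul_of_mem_Mset hv ht] at *
  exact segTo_add_smul hpos

lemma inv_eNorm_smul_mem_badDirs {d : ℝ × ℝ} (hd : d ≠ 0) (haxis : d.1 = 0 ∨ d.2 = 0) :
    (eNorm d)⁻¹ • d ∈ badDirs := by
  obtain ⟨a, b⟩ := d
  rcases haxis with rfl | rfl <;> simp only [ne_eq, Prod.mk_eq_zero, true_and, and_true] at hd <;>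
    rcases Ne.lt_or_gt hd with h | h <;>
    simp [badDirs, eNorm, e1, e2, Prod.ext_iff, Real.sqrt_sq_eq_abs, abs_of_neg, abs_of_pos, h,
      h.ne, h.ne']

lemma norm_sub_eq_of_add_smul_eq {ξ η v w : ℝ × ℝ} (hv : v ∈ Mset) (hw : w ∈ Mset) {A S : ℝ}
    (hS : 0 ≤ S) (hSA : S < A) (h : ξ + A • v = η + S • w)
    (hξη : (eNorm (ξ - η))⁻¹ • (ξ - η) ∉ badDirs) : ‖ξ - η‖ = A := by
  have hA : 0 < A := hS.trans_lt hSA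
  have hd : ξ - η = S • w - A • v := by rw [eq_sub_of_add_eq h]; abel
  have hd0 : ξ - η ≠ 0 := by
    intro h0
    have := congrArg eNorm (sub_eq_zero.1 (hd ▸ h0))
    rw [eNorm_smul_of_mem_Mset hw hS, eNorm_smul_of_mem_Mset hv hA.le] at this
    exact hSA.ne this
  rcases mem_Mset_axis hv with ⟨hv2, hv1⟩ | ⟨hv1, hv2⟩ <;>
    rcases mem_Mset_axis hw with ⟨hw2, hw1⟩ | ⟨hw1, hw2⟩
  · exact absurd (inv_eNorm_smul_mem_badDirs hd0 (Or.inr (by simp [hd, hv2, hw2]))) hξη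
  · simp [hd, Prod.norm_def, hv2, hw1, hv1, hw2, abs_of_pos hA, abs_of_nonneg hS, hSA.le]
  · simp [hd, Prod.norm_def, hv1, hw2, hv2, hw1, abs_of_pos hA, abs_of_nonneg hS, hSA.le]
  · exact absurd (inv_eNorm_smul_mem_badDirs hd0 (Or.inl (by simp [hd, hv1, hw1]))) hξη

structure IsFiniteGrowth (φ : Set Pt) (ℓ : Pt → ℝ) : Prop where
  hardCore : ∀ x ∈ φ, ∀ y ∈ φ, x ≠ y → realSeg x.1 x.2 (ℓ x) ∩ realSeg y.1 y.2 (ℓ y) = ∅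
  exists_stop : ∀ x ∈ φ, ∃ y ∈ φ, x.1 + ℓ x • x.2 ∈ realSeg y.1 y.2 (ℓ y) ∧
    eNorm (x.1 + ℓ x • x.2 - y.1) < ℓ x

namespace IsFiniteGrowth

variable {φ : Set Pt} {a b : Pt → ℝ}

lemma pos (ha : IsFiniteGrowth φ a) {x : Pt} (hx : x ∈ φ) : 0 < a x := by
  obtain ⟨y, -, -, hlt⟩ := ha.exists_stop x hx
  exact (eNorm_nonneg _).trans_lt hlt

lemma injOn_fst (ha : IsFiniteGrowth φ a) : φ.InjOn Prod.fst := by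
  intro x hx y hy hxy
  by_contra hne
  have hmem : ∀ z ∈ φ, z.1 ∈ realSeg z.1 z.2 (a z) := fun z hz =>
    ⟨0, le_rfl, ha.pos hz, by rw [zero_smul, add_zero]⟩
  exact (ha.hardCore x hx y hy hne).subset ⟨hmem x hx, hxy ▸ hmem y hy⟩

lemma exists_lt_of_lt (hφ : Admissible φ) (ha : IsFiniteGrowth φ a) (hb : IsFiniteGrowth φ b)
    {x : Pt} (hx : x ∈ φ) (hab : a x < b x) :
    ∃ y ∈ φ, ‖x.1 - y.1‖ = a x ∧ b y < a y ∧ b y < a x := by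
  obtain ⟨y, hy, ⟨s, hs, hsy, hxys⟩, hstop⟩ := ha.exists_stop x hx
  have hxy : x ≠ y := by
    rintro rfl
    rw [add_sub_cancel_left, eNorm_smul_of_mem_Mset (hφ.2.1 x hx) (ha.pos hx).le] at hstop
    exact hstop.false
  rw [hxys, add_sub_cancel_left, eNorm_smul_of_mem_Mset (hφ.2.1 y hy) hs] at hstop
  have hbs : b y ≤ s := by
    by_contra! hsb
    exact (hb.hardCore x hx y hy hxy).subset
      ⟨⟨a x, (ha.pos hx).le, hab, rfl⟩, ⟨s, hs, hsb, hxys⟩⟩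
  exact ⟨y, hy, norm_sub_eq_of_add_smul_eq (hφ.2.1 x hx) (hφ.2.1 y hy) hs hstop hxys
    (hφ.2.2.2 x hx y hy hxy), hbs.trans_lt hsy, hbs.trans_lt hstop⟩

end IsFiniteGrowth

lemma HasInfDescChain.mono {A B : Set (ℝ × ℝ)} (hAB : A ⊆ B) (hA : HasInfDescChain A) :
    HasInfDescChain B := by
  obtain ⟨r, hr, ξ, hinj, hmem, h0, hdesc⟩ := hA
  exact ⟨r, hr, ξ, hinj, fun i => hAB (hmem i), h0, hdesc⟩

lemma hasInfDescChain_of_forall_exists {α : Type*} {S : Set α} {p : α → ℝ × ℝ} {m : α → ℝ}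
    (hp : S.InjOn p) {x₀ : α} (hx₀ : x₀ ∈ S) (hm₀ : 0 < m x₀)
    (hstep : ∀ x ∈ S, ∃ y ∈ S, ‖p x - p y‖ = m x ∧ m y < m x) : HasInfDescChain (p '' S) := by
  choose F hF using fun x : S => hstep x x.2
  let u : ℕ → S := fun n => (fun x => ⟨F x, (hF x).1⟩)^[n] ⟨x₀, hx₀⟩
  have hu (n : ℕ) : ‖p (u n) - p (u (n + 1))‖ = m (u n) ∧ m (u (n + 1)) < m (u n) := by
    simp only [u, Function.iterate_succ_apply']
    exact (hF _).2
  have hmu : StrictAnti fun n => m (u n) := strictAnti_nat_of_succ_lt fun n => (hu n).2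
  refine ⟨m x₀, hm₀, fun n => p (u n), fun i j hij => hmu.injective ?_,
    fun i => ⟨u i, (u i).2, rfl⟩, (hu 0).1.le, fun i hi => ?_⟩
  · simp only [Subtype.coe_inj.1 (hp (u i).2 (u j).2 hij)]
  · obtain ⟨k, rfl⟩ := Nat.exists_eq_add_of_le' hi
    rw [Nat.add_sub_cancel, norm_sub_rev, (hu (k + 1)).1, norm_sub_rev, (hu k).1]
    exact (hu k).2

theorem IsFiniteGrowth.eqOn {φ : Set Pt} {a b : Pt → ℝ} (hφ : Admissible φ)
    (ha : IsFiniteGrowth φ a) (hb : IsFiniteGrowth φ b) : Set.EqOn a b φ := by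
  by_contra h
  obtain ⟨x₀, hx₀, hne₀⟩ : ∃ x ∈ φ, a x ≠ b x := by simpa [Set.EqOn] using h
  have hstep : ∀ x ∈ {x ∈ φ | a x ≠ b x}, ∃ y ∈ {x ∈ φ | a x ≠ b x},
      ‖x.1 - y.1‖ = min (a x) (b x) ∧ min (a y) (b y) < min (a x) (b x) := by
    rintro x ⟨hx, hne⟩
    rcases hne.lt_or_gt with hlt | hlt
    · obtain ⟨y, hy, hxy, hba, hbx⟩ := ha.exists_lt_of_lt hφ hb hx hlt
      rw [min_eq_left hlt.le]
      exact ⟨y, ⟨hy, hba.ne'⟩, hxy, (min_le_right _ _).trans_lt hbx⟩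
    · obtain ⟨y, hy, hxy, hab, hax⟩ := hb.exists_lt_of_lt hφ ha hx hlt
      rw [min_eq_right hlt.le]
      exact ⟨y, ⟨hy, hab.ne⟩, hxy, (min_le_left _ _).trans_lt hax⟩
  have hchain := hasInfDescChain_of_forall_exists (ha.injOn_fst.mono (Set.sep_subset _ _))
    ⟨hx₀, hne₀⟩ (lt_min (ha.pos hx₀) (hb.pos hx₀)) hstep
  exact hφ.2.2.1 (hchain.mono (Set.image_mono (Set.sep_subset _ _)))

section

variable {φ : Set Pt} {f : Pt → ℝ≥0∞} {hcm : Pt → Pt} {hgm : Pt → ℝ × ℝ}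

lemma IsGrowthFn.isFiniteGrowth (hf : IsGrowthFn φ f) (hfin : ∀ x ∈ φ, f x ≠ ⊤) :
    IsFiniteGrowth φ fun x => (f x).toReal where
  hardCore x hx y hy hxy := by
    rw [← seg_eq_realSeg (hfin x hx), ← seg_eq_realSeg (hfin y hy)]
    exact hf.1 x hx y hy hxy
  exists_stop x hx := by
    obtain ⟨y, hy, hmem, hlt⟩ := (hf.2.1 x hx (hfin x hx)).exists
    rw [seg_eq_realSeg (hfin y hy)] at hmem
    exact ⟨y, hy, hmem, hlt⟩

lemma hcSpec_tip (hφ : Admissible φ) (hf : IsGrowthFn φ f) (hfin : ∀ x ∈ φ, f x ≠ ⊤)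
    (hstop : ∀ x ∈ φ, IsStopNbr φ f x (hcm x)) : HcSpec φ hcm (tip f) := by
  have hlen : ∀ x ∈ φ, eNorm (tip f x - x.1) = (f x).toReal := fun x hx => by
    rw [tip, add_sub_cancel_left, eNorm_smul_of_mem_Mset (hφ.2.1 x hx) ENNReal.toReal_nonneg]
  have hseg : ∀ x ∈ φ, segTo x.1 (tip f x) = seg x.1 x.2 (f x) := fun x hx => by
    rw [seg_eq_realSeg (hfin x hx), tip,
      segTo_add_smul ((hf.isFiniteGrowth hfin).pos hx)]
  refine ⟨fun x hx => ?_, fun x hx y hy hxy => ?_, fun x hx => ?_⟩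
  · obtain ⟨hy, ⟨t, ht, -, htip⟩, -⟩ := hstop x hx
    exact ⟨hy, ⟨_, ENNReal.toReal_nonneg, rfl⟩, ⟨t, ht, htip⟩⟩
  · rw [hseg x hx, hseg y hy]
    exact hf.1 x hx y hy hxy
  · obtain ⟨hy, hmem, hlt⟩ := hstop x hx
    rw [hseg _ hy, hlen x hx]
    exact ⟨hmem, hlt⟩

namespace HcSpec

lemma isFiniteGrowth (hφ : Admissible φ) (h : HcSpec φ hcm hgm) :
    IsFiniteGrowth φ fun x => eNorm (hgm x - x.1) := by
  have hray (x) (hx : x ∈ φ) := (h.1 x hx).2.1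
  have hpos (x) (hx : x ∈ φ) : 0 < eNorm (hgm x - x.1) :=
    (eNorm_nonneg _).trans_lt (h.2.2 x hx).2
  have hseg (x) (hx : x ∈ φ) := segTo_eq_realSeg (hφ.2.1 x hx) (hray x hx) (hpos x hx)
  refine ⟨fun x hx y hy hxy => ?_, fun x hx => ?_⟩
  · rw [← hseg x hx, ← hseg y hy]
    exact h.2.1 x hx y hy hxy
  · have hy := (h.1 x hx).1
    refine ⟨hcm x, hy, ?_⟩
    rw [← eq_add_eNorm_smul_of_mem_ray (hφ.2.1 x hx) (hray x hx), ← hseg _ hy]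
    exact h.2.2 x hx

lemma isStopNbr (hφ : Admissible φ) (hf : IsGrowthFn φ f) (hfin : ∀ x ∈ φ, f x ≠ ⊤)
    (h : HcSpec φ hcm hgm) {x : Pt} (hx : x ∈ φ) : IsStopNbr φ f x (hcm x) := by
  have hℓ := h.isFiniteGrowth hφ
  have hlen : ∀ z ∈ φ, eNorm (hgm z - z.1) = (f z).toReal := fun z hz =>
    hℓ.eqOn hφ (hf.isFiniteGrowth hfin) hz
  have htip : ∀ z ∈ φ, hgm z = tip f z := fun z hz => by
    rw [eq_add_eNorm_smul_of_mem_ray (hφ.2.1 z hz) (h.1 z hz).2.1, hlen z hz, tip]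
  have hy := (h.1 x hx).1
  obtain ⟨hmem, hlt⟩ := h.2.2 x hx
  refine ⟨hy, ?_, ?_⟩
  · rwa [seg_eq_realSeg (hfin _ hy), ← hlen _ hy, ← htip x hx,
      ← segTo_eq_realSeg (hφ.2.1 _ hy) (h.1 _ hy).2.1 (hℓ.pos hy)]
  · rwa [← htip x hx, ← hlen x hx]

end HcSpec

end

/-- Corollary: existence and uniqueness of the combinatorial
descendant.  Let `φ` be admissible with (unique) growth function `f`, finite on `φ`.
Then there exist `h_c : φ → φ` and an associated geometric descendant `h_g` satisfying
the hard-core property and the existence of stopping neighbors; moreover the values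
`h_c(x)`, `x ∈ φ`, are uniquely determined by these properties. -/
theorem exists_hc_spec (φ : Set Pt) (hφ : Admissible φ) (f : Pt → ℝ≥0∞)
    (hf : IsGrowthFn φ f) (hfin : ∀ x ∈ φ, f x ≠ ⊤) :
    ∃ hcm : Pt → Pt, ∃ hgm : Pt → ℝ × ℝ, HcSpec φ hcm hgm ∧
      ∀ hcm' : Pt → Pt, ∀ hgm' : Pt → ℝ × ℝ, HcSpec φ hcm' hgm' →
        ∀ x ∈ φ, hcm' x = hcm x := by
  choose! hcm hstop using fun x hx => (hf.2.1 x hx (hfin x hx)).exists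
  refine ⟨hcm, tip f, hcSpec_tip hφ hf hfin hstop, fun hcm' hgm' h x hx => ?_⟩
  exact (hf.2.1 x hx (hfin x hx)).unique (h.isStopNbr hφ hf hfin hx) (hstop x hx)

end Lilypond
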